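/- arXiv:2207.12867 — 2 statements merged into one kernel-verified Lean document; each statement's English description precedes it below -/
import Mathlib

section
/- Under the do-calculus rules applied to a DAG where R has no incoming edges (R is a context variable) and Y has no outgoing edges, if R ⊥ Y in G with edges into M deleted and edges out of R deleted, and R ⊥ M in G with edges out of R deleted, then E[Y(R=0, G_{M|R=1})] = ∫∫ y · p(y | do(m), R=0) · p(m | R=1) dy dm. -/
open Finset

namespace Formal

variable {V : Type} [Fintype V] [DecidableEq V] {S : Type} [Fintype S] [DecidableEq S]

/-- Consecutive triples of a list. -/
def triples {α : Type} : List α → List (α × α × α)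
  | a :: b :: c :: rest => (a, b, c) :: triples (b :: c :: rest)
  | _ => []

/-- A walk in the graph with edge relation `E`, traversing edges in either direction. -/
def IsWalk (E : V → V → Prop) : List V → Prop
  | a :: b :: rest => (E a b ∨ E b a) ∧ IsWalk E (b :: rest)
  | _ => True

/-- The middle vertex of a consecutive triple is a collider. -/
def IsCollider (E : V → V → Prop) (t : V × V × V) : Prop :=
  E t.1 t.2.1 ∧ E t.2.2 t.2.1

/-- A walk is blocked by the conditioning set `Z`: some non-collider on it is in `Z`,
or some collider on it has no descendant in `Z`. -/
def Blocked (E : V → V → Prop) (Z : Set V) (p : List V) : Prop :=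
  ∃ t ∈ triples p,
    (¬ IsCollider E t ∧ t.2.1 ∈ Z) ∨
    (IsCollider E t ∧ ∀ d, Relation.ReflTransGen E t.2.1 d → d ∉ Z)

/-- d-separation of `x` and `y` given `Z`. -/
def DSep (E : V → V → Prop) (Z : Set V) (x y : V) : Prop :=
  ∀ p : List V, p.Nodup → IsWalk E p → p.head? = some x → p.getLast? = some y →
    2 ≤ p.length → Blocked E Z p

/-- A back-door walk from `M` to `Y`: a walk starting with an edge into `M`. -/
def BackDoorWalk (E : V → V → Prop) (M Y : V) (p : List V) : Prop :=
  IsWalk E p ∧ p.Nodup ∧ p.head? = some M ∧ p.getLast? = some Y ∧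
    ∃ w rest, p = M :: w :: rest ∧ E w M

/-- A Markovian factor system over the DAG `E`: a family of conditional factors,
one per vertex, each depending only on the vertex and its parents, normalized. -/
structure FactorSystem (E : V → V → Prop) (S : Type) [Fintype S] : Type where
  f : V → (V → S) → ℝ
  nonneg : ∀ i v, 0 ≤ f i v
  localDep : ∀ i (v w : V → S), v i = w i → (∀ j, E j i → v j = w j) → f i v = f i w
  normalized : ∀ i (v : V → S), ∑ s : S, f i (Function.update v i s) = 1

/-- The joint distribution of a Markovian factor system. -/
noncomputable def FactorSystem.joint {E : V → V → Prop} (F : FactorSystem E S)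
    (v : V → S) : ℝ :=
  ∏ i, F.f i v

/-- The interventional (truncated-factorization) distribution under `do(M = m)`. -/
noncomputable def FactorSystem.doJoint {E : V → V → Prop} (F : FactorSystem E S)
    (M : V) (m : S) (v : V → S) : ℝ :=
  if v M = m then ∏ i ∈ Finset.univ.erase M, F.f i v else 0

/-- Probability of an event under a (finitely supported) distribution. -/
noncomputable def Pr (P : (V → S) → ℝ) (A : Set (V → S)) : ℝ :=
  ∑ v, A.indicator P v

/-- Conditional probability. -/
noncomputable def CPr (P : (V → S) → ℝ) (A B : Set (V → S)) : ℝ :=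
  Pr P (A ∩ B) / Pr P B


-- ===== auxiliary lemmas =====

lemma f_pos {E : V → V → Prop} (F : FactorSystem E S) (hpos : ∀ v, 0 < F.joint v)
    (i : V) (v : V → S) : 0 < F.f i v := by
  rcases (F.nonneg i v).lt_or_eq with h | h
  · exact h
  · exfalso
    have h0 : F.joint v = 0 := Finset.prod_eq_zero (Finset.mem_univ i) h.symm
    exact absurd h0 (hpos v).ne'

lemma Pr_coord_pos [Nonempty S] {E : V → V → Prop} (F : FactorSystem E S)
    (hpos : ∀ v, 0 < F.joint v) (k : V) (s : S) : 0 < Pr F.joint {w | w k = s} := by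
  classical
  rw [Pr]
  refine Finset.sum_pos' (fun v _ => Set.indicator_nonneg (fun v _ => (hpos v).le) v) ?_
  refine ⟨Function.update (Classical.arbitrary (V → S)) k s, Finset.mem_univ _, ?_⟩
  rw [Set.indicator_of_mem (by simp)]
  exact hpos _

lemma prod_ind_eq (v w : V → S) :
    (∏ i, if w i = v i then (1:ℝ) else 0) = if w = v then 1 else 0 := by
  by_cases h : w = v
  · simp [h]
  · rw [if_neg h]
    obtain ⟨i, hi⟩ := Function.ne_iff.mp h
    exact Finset.prod_eq_zero (Finset.mem_univ i) (if_neg hi)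

lemma sum_trunc_eq_one (E : V → V → Prop) (hacyc : ∀ v, ¬ Relation.TransGen E v v)
    (F : FactorSystem E S) (T : Finset V) (v : V → S) :
    ∑ w : V → S, (∏ i ∈ T, if w i = v i then (1:ℝ) else 0) * ∏ i ∈ Tᶜ, F.f i w = 1 := by
  suffices H : ∀ n (T : Finset V) (v : V → S), Tᶜ.card = n →
      ∑ w : V → S, (∏ i ∈ T, if w i = v i then (1:ℝ) else 0) * ∏ i ∈ Tᶜ, F.f i w = 1 from
    H _ T v rfl
  intro n
  induction n with
  | zero =>
    intro T v hT
    rw [Finset.card_eq_zero] at hT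
    have hTu : T = univ := (Finset.compl_eq_empty_iff T).mp hT
    subst hTu
    simp only [hT, Finset.prod_empty, mul_one, prod_ind_eq]
    simp
  | succ n ih =>
    intro T v hT
    haveI : IsTrans V (fun a b => Relation.TransGen E b a) :=
      ⟨fun _ _ _ h1 h2 => Relation.TransGen.trans h2 h1⟩
    haveI : IsIrrefl V (fun a b => Relation.TransGen E b a) := ⟨fun a => hacyc a⟩
    have hne : (Tᶜ : Finset V).Nonempty := Finset.card_pos.mp (by omega)
    obtain ⟨j, hjT, hjmax⟩ :=
      (Finite.wellFounded_of_trans_of_irrefl (fun a b => Relation.TransGen E b a)).has_min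
        (↑(Tᶜ : Finset V) : Set V) ⟨hne.choose, hne.choose_spec⟩
    have hjTc : j ∈ Tᶜ := hjT
    have hjnT : j ∉ T := Finset.mem_compl.mp hjTc
    have hmax : ∀ k ∈ Tᶜ, ¬ E j k := fun k hk hE =>
      hjmax k hk (Relation.TransGen.single hE)
    set H : (V → S) → ℝ :=
      fun w => (∏ i ∈ T, if w i = v i then (1:ℝ) else 0) * ∏ i ∈ Tᶜ.erase j, F.f i w with hH
    have hHupd : ∀ (w : V → S) (s : S), H (Function.update w j s) = H w := by
      intro w s
      have h1 : (∏ i ∈ T, if Function.update w j s i = v i then (1:ℝ) else 0)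
          = ∏ i ∈ T, if w i = v i then (1:ℝ) else 0 :=
        Finset.prod_congr rfl fun i hi => by
          rw [Function.update_of_ne (ne_of_mem_of_not_mem hi hjnT) _ _]
      have h2 : (∏ i ∈ Tᶜ.erase j, F.f i (Function.update w j s))
          = ∏ i ∈ Tᶜ.erase j, F.f i w :=
        Finset.prod_congr rfl fun i hi => by
          obtain ⟨hij, hiTc⟩ := Finset.mem_erase.mp hi
          exact F.localDep i _ _ (Function.update_of_ne hij _ _) fun k hk =>
            Function.update_of_ne (fun h => hmax i hiTc (by rw [← h]; exact hk)) _ _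
      simp only [hH, h1, h2]
    have hsplit : ∀ w : V → S,
        (∏ i ∈ T, if w i = v i then (1:ℝ) else 0) * ∏ i ∈ Tᶜ, F.f i w
          = F.f j w * H w := by
      intro w
      rw [hH, ← Finset.mul_prod_erase Tᶜ _ hjTc]; ring
    have key : ∑ w : V → S, F.f j w * H w = ∑ w : V → S, (if w j = v j then 1 else 0) * H w := by
      have step1 : ∀ s : S,
          (∑ w : V → S, if w j = s then F.f j w * H w else 0)
            = ∑ w : V → S, if w j = v j then F.f j (Function.update w j s) * H w else 0 := by
        intro s
        rw [← Finset.sum_filter, ← Finset.sum_filter]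
        refine Finset.sum_nbij' (fun w => Function.update w j (v j))
          (fun w => Function.update w j s) ?_ ?_ ?_ ?_ ?_
        · intro w hw; simp [Finset.mem_filter]
        · intro w hw; simp [Finset.mem_filter]
        · intro w hw
          simp only [Finset.mem_filter, Finset.mem_univ, true_and] at hw
          simp only [Function.update_idem, ← hw, Function.update_eq_self]
        · intro w hw
          simp only [Finset.mem_filter, Finset.mem_univ, true_and] at hw
          simp only [Function.update_idem, ← hw, Function.update_eq_self]
        · intro w hw
          simp only [Finset.mem_filter, Finset.mem_univ, true_and] at hw
          simp only [hHupd, Function.update_idem, ← hw, Function.update_eq_self]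
      calc ∑ w : V → S, F.f j w * H w
          = ∑ w : V → S, ∑ s : S, if w j = s then F.f j w * H w else 0 := by
            refine Finset.sum_congr rfl fun w _ => ?_
            rw [Finset.sum_ite_eq univ (w j) fun _ => F.f j w * H w]; simp
        _ = ∑ s : S, ∑ w : V → S, if w j = s then F.f j w * H w else 0 := Finset.sum_comm
        _ = ∑ s : S, ∑ w : V → S, if w j = v j then F.f j (Function.update w j s) * H w else 0 := by
            exact Finset.sum_congr rfl fun s _ => step1 s
        _ = ∑ w : V → S, ∑ s : S, if w j = v j then F.f j (Function.update w j s) * H w else 0 :=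
            Finset.sum_comm
        _ = ∑ w : V → S, (if w j = v j then 1 else 0) * H w := by
            refine Finset.sum_congr rfl fun w _ => ?_
            by_cases h : w j = v j
            · simp only [if_pos h, ← Finset.sum_mul, F.normalized j w, one_mul]
            · simp [h]
    calc ∑ w : V → S, (∏ i ∈ T, if w i = v i then (1:ℝ) else 0) * ∏ i ∈ Tᶜ, F.f i w
        = ∑ w : V → S, F.f j w * H w := Finset.sum_congr rfl fun w _ => hsplit w
      _ = ∑ w : V → S, (if w j = v j then 1 else 0) * H w := key
      _ = ∑ w : V → S, (∏ i ∈ insert j T, if w i = v i then (1:ℝ) else 0)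
            * ∏ i ∈ (insert j T)ᶜ, F.f i w := by
          refine Finset.sum_congr rfl fun w _ => ?_
          rw [Finset.prod_insert hjnT, Finset.compl_insert, hH]; ring
      _ = 1 := ih (insert j T) v (by
          rw [Finset.compl_insert, Finset.card_erase_of_mem hjTc, hT]
          omega)


/-- do-calculus reduction of the adjusted counterfactual mean:
if `R` is a context variable (no incoming edges), `Y` a sink, `R ⊥ Y` in
`G` with edges into `M` and out of `R` deleted, and `R ⊥ M` in `G` with edges out of `R`
deleted, then the mean of the adjusted counterfactual `Y(R = r₀, G_{M|R=r₁})` equals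
`∑ₘ ∑_y y ⬝ P(y | do(m), R = r₀) ⬝ P(m | R = r₁)`. -/
theorem stmt14
    (E : V → V → Prop) (hacyc : ∀ v, ¬ Relation.TransGen E v v)
    (M R Y : V) (hroot : ∀ j, ¬ E j R) (hsink : ∀ j, ¬ E Y j)
    (hsep1 : DSep (fun a b => (E a b ∧ b ≠ M) ∧ a ≠ R) ∅ R Y)
    (hsep2 : DSep (fun a b => E a b ∧ a ≠ R) ∅ R M)
    (F : FactorSystem E S) (hpos : ∀ v, 0 < F.joint v)
    (r0 r1 : S) (val : S → ℝ) :
    (∑ v : V → S, val (v Y) *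
      (if v R = r0 then
          (∏ i ∈ (Finset.univ.erase M).erase R, F.f i v) *
            CPr F.joint {w | w M = v M} {w | w R = r1}
        else 0)) =
    ∑ m : S, ∑ y : S, val y *
      (CPr (F.doJoint M m) {v | v Y = y} {v | v R = r0} *
        CPr F.joint {v | v M = m} {v | v R = r1}) := by
  classical
  rcases isEmpty_or_nonempty S with hS | hS
  · haveI : IsEmpty (V → S) := ⟨fun f => (hS.false (f M))⟩
    simp
  obtain ⟨w0⟩ : Nonempty (V → S) := inferInstance
  have hfpos : ∀ i (v : V → S), 0 < F.f i v := f_pos F hpos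
  by_cases hMR : R = M
  · -- degenerate case R = M
    subst hMR
    have hPrR1 : Pr F.joint {w | w R = r1} ≠ 0 := (Pr_coord_pos F hpos R r1).ne'
    have hC : ∀ s : S, CPr F.joint {w | w R = s} {w | w R = r1}
        = if s = r1 then 1 else 0 := by
      intro s
      by_cases h : s = r1
      · subst h
        rw [if_pos rfl, CPr, Set.inter_self, div_self hPrR1]
      · rw [if_neg h, CPr]
        have : ({w : V → S | w R = s} ∩ {w | w R = r1}) = ∅ := by
          ext w; simp only [Set.mem_inter_iff, Set.mem_setOf_eq, Set.mem_empty_iff_false,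
            iff_false, not_and]
          intro hw1 hw2; exact h (hw1 ▸ hw2)
        rw [this]
        simp [Pr]
    simp only [Finset.erase_idem, hC]
    -- collapse the m-sum on the RHS
    have hRHS : ∀ y : S, (∑ m : S, val y *
        (CPr (F.doJoint R m) {v | v Y = y} {v | v R = r0} * if m = r1 then 1 else 0))
        = val y * CPr (F.doJoint R r1) {v | v Y = y} {v | v R = r0} := by
      intro y
      have h1 : ∀ m : S, val y *
          (CPr (F.doJoint R m) {v | v Y = y} {v | v R = r0} * if m = r1 then 1 else 0)
          = if m = r1 then val y * CPr (F.doJoint R m) {v | v Y = y} {v | v R = r0}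
            else 0 := by
        intro m; split_ifs <;> ring
      calc (∑ m : S, val y *
            (CPr (F.doJoint R m) {v | v Y = y} {v | v R = r0} * if m = r1 then 1 else 0))
          = ∑ m : S, (if m = r1 then
              val y * CPr (F.doJoint R m) {v | v Y = y} {v | v R = r0} else 0) :=
            Finset.sum_congr rfl fun m _ => h1 m
        _ = _ := by rw [Finset.sum_ite_eq' univ r1]; simp
    have hRHSeq : (∑ m : S, ∑ y : S, val y *
          (CPr (F.doJoint R m) {v | v Y = y} {v | v R = r0} * if m = r1 then 1 else 0))
        = ∑ y : S, val y * CPr (F.doJoint R r1) {v | v Y = y} {v | v R = r0} := by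
      rw [Finset.sum_comm]
      exact Finset.sum_congr rfl fun y _ => hRHS y
    rw [hRHSeq]
    by_cases hr : r0 = r1
    · subst hr
      -- denominator is 1
      have hden : Pr (F.doJoint R r0) {v | v R = r0} = 1 := by
        have htr := sum_trunc_eq_one E hacyc F {R} (Function.update w0 R r0)
        have hcompl : ({R} : Finset V)ᶜ = Finset.univ.erase R := by
          ext i; simp [eq_comm]
        rw [hcompl] at htr
        rw [Pr, ← htr]
        refine Finset.sum_congr rfl fun w _ => ?_
        rw [Set.indicator_apply, Finset.prod_singleton, Function.update_self]
        simp only [Set.mem_setOf_eq, FactorSystem.doJoint]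
        by_cases h : w R = r0 <;> simp [h]
      have hnum : ∀ y, Pr (F.doJoint R r0) ({v | v Y = y} ∩ {v | v R = r0})
          = ∑ w : V → S, (if w Y = y ∧ w R = r0 then ∏ i ∈ Finset.univ.erase R, F.f i w
              else 0) := by
        intro y
        rw [Pr]
        refine Finset.sum_congr rfl fun w _ => ?_
        rw [Set.indicator_apply]
        simp only [Set.mem_inter_iff, Set.mem_setOf_eq, FactorSystem.doJoint]
        by_cases h1 : w Y = y <;> by_cases h2 : w R = r0 <;> simp [h1, h2]
      have hCPr : ∀ y, CPr (F.doJoint R r0) {v | v Y = y} {v | v R = r0}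
          = ∑ w : V → S, (if w Y = y ∧ w R = r0 then ∏ i ∈ Finset.univ.erase R, F.f i w
              else 0) := by
        intro y
        rw [CPr, hnum y, hden, div_one]
      have hexp : ∀ y : S, val y * CPr (F.doJoint R r0) {v | v Y = y} {v | v R = r0}
          = ∑ w : V → S, (if w Y = y then (if w R = r0 then
              val y * ∏ i ∈ Finset.univ.erase R, F.f i w else 0) else 0) := by
        intro y
        rw [hCPr y, Finset.mul_sum]
        refine Finset.sum_congr rfl fun w _ => ?_
        by_cases h1 : w Y = y <;> by_cases h2 : w R = r0 <;> simp [h1, h2]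
      calc (∑ v : V → S, val (v Y) * (if v R = r0 then
              (∏ i ∈ Finset.univ.erase R, F.f i v) * (if v R = r0 then 1 else 0) else 0))
          = ∑ w : V → S, ∑ y : S, (if w Y = y then (if w R = r0 then
              val y * ∏ i ∈ Finset.univ.erase R, F.f i w else 0) else 0) := by
            refine Finset.sum_congr rfl fun w _ => ?_
            rw [Finset.sum_ite_eq univ (w Y)]
            simp only [Finset.mem_univ, if_true]
            split_ifs <;> ring
        _ = ∑ y : S, ∑ w : V → S, (if w Y = y then (if w R = r0 then
              val y * ∏ i ∈ Finset.univ.erase R, F.f i w else 0) else 0) := Finset.sum_comm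
        _ = ∑ y : S, val y * CPr (F.doJoint R r0) {v | v Y = y} {v | v R = r0} :=
            Finset.sum_congr rfl fun y _ => (hexp y).symm
    · -- r0 ≠ r1 : both sides vanish
      have hL : ∀ v : V → S, val (v Y) * (if v R = r0 then
          (∏ i ∈ Finset.univ.erase R, F.f i v) * (if v R = r1 then 1 else 0) else 0) = 0 := by
        intro v
        by_cases h : v R = r0
        · rw [if_pos h, if_neg (fun h' => hr (h ▸ h'))]; ring
        · rw [if_neg h]; ring
      have hden0 : Pr (F.doJoint R r1) {v | v R = r0} = 0 := by
        rw [Pr]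
        refine Finset.sum_eq_zero fun w _ => ?_
        rw [Set.indicator_apply]
        simp only [Set.mem_setOf_eq, FactorSystem.doJoint]
        by_cases h : w R = r0
        · rw [if_pos h, if_neg (fun h' => hr (h ▸ h'))]
        · rw [if_neg h]
      have hC0 : ∀ y : S, CPr (F.doJoint R r1) {v | v Y = y} {v | v R = r0} = 0 := by
        intro y; rw [CPr, hden0, div_zero]
      calc (∑ v : V → S, val (v Y) * (if v R = r0 then
              (∏ i ∈ Finset.univ.erase R, F.f i v) * (if v R = r1 then 1 else 0) else 0))
          = 0 := Finset.sum_eq_zero fun v _ => hL v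
        _ = ∑ y : S, val y * CPr (F.doJoint R r1) {v | v Y = y} {v | v R = r0} := by
            rw [Finset.sum_congr rfl fun y (_ : y ∈ univ) => by rw [hC0 y, mul_zero]]
            simp
  · -- main case R ≠ M
    have hMR' : M ≠ R := fun h => hMR h.symm
    have hRmem : R ∈ Finset.univ.erase M := Finset.mem_erase.mpr ⟨hMR, Finset.mem_univ R⟩
    set pR : S → ℝ := fun s => F.f R (Function.update w0 R s) with hpR
    have hfR : ∀ w : V → S, F.f R w = pR (w R) := by
      intro w
      rw [hpR]
      exact F.localDep R w (Function.update w0 R (w R))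
        (by rw [Function.update_self]) (fun j hj => absurd hj (hroot j))
    have hpRpos : ∀ s, 0 < pR s := fun s => hfpos R _
    -- the kernel A
    set A : S → S → ℝ := fun m y => ∑ w : V → S,
        (if w Y = y ∧ w M = m ∧ w R = r0 then
          ∏ i ∈ (Finset.univ.erase M).erase R, F.f i w else 0) with hA
    set C : S → ℝ := fun m => CPr F.joint {v | v M = m} {v | v R = r1} with hCdef
    -- compl computation
    have hDc : (insert R ({M} : Finset V))ᶜ = (Finset.univ.erase M).erase R := by
      ext i
      simp only [Finset.mem_compl, Finset.mem_insert, Finset.mem_singleton, Finset.mem_erase,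
        Finset.mem_univ, and_true]
      tauto
    have hRnM : R ∉ ({M} : Finset V) := by simp [hMR]
    -- denominator
    have hden : ∀ m, Pr (F.doJoint M m) {v | v R = r0} = pR r0 := by
      intro m
      set vmr : V → S := Function.update (Function.update w0 M m) R r0 with hvmr
      have hvR : vmr R = r0 := by rw [hvmr, Function.update_self]
      have hvM : vmr M = m := by
        rw [hvmr, Function.update_of_ne hMR', Function.update_self]
      have htr := sum_trunc_eq_one E hacyc F (insert R {M}) vmr
      rw [hDc] at htr
      have h1 : Pr (F.doJoint M m) {v | v R = r0}
          = pR r0 * ∑ w : V → S,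
              (∏ i ∈ insert R ({M} : Finset V), if w i = vmr i then (1:ℝ) else 0) *
              ∏ i ∈ (Finset.univ.erase M).erase R, F.f i w := by
        rw [Pr, Finset.mul_sum]
        refine Finset.sum_congr rfl fun w _ => ?_
        rw [Set.indicator_apply, Finset.prod_insert hRnM, Finset.prod_singleton, hvR, hvM]
        simp only [Set.mem_setOf_eq, FactorSystem.doJoint]
        by_cases h1 : w R = r0 <;> by_cases h2 : w M = m
        · rw [if_pos h1, if_pos h2, if_pos h1, if_pos h2,
            ← Finset.mul_prod_erase (Finset.univ.erase M) _ hRmem, hfR w, h1]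
          ring
        · rw [if_pos h1, if_neg h2, if_pos h1, if_neg h2]; ring
        · rw [if_neg h1, if_neg h1]; ring
        · rw [if_neg h1, if_neg h1]; ring
      rw [h1, htr, mul_one]
    -- numerator
    have hnum : ∀ m y, Pr (F.doJoint M m) ({v | v Y = y} ∩ {v | v R = r0})
        = pR r0 * A m y := by
      intro m y
      rw [hA, Pr, Finset.mul_sum]
      refine Finset.sum_congr rfl fun w _ => ?_
      rw [Set.indicator_apply]
      simp only [Set.mem_inter_iff, Set.mem_setOf_eq, FactorSystem.doJoint]
      by_cases h1 : w Y = y <;> by_cases h2 : w M = m <;> by_cases h3 : w R = r0 <;>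
        simp only [h1, h2, h3, true_and, and_true, false_and, and_false, and_self,
          if_true, if_false, ite_true, ite_false, mul_zero, ite_self, not_false_iff]
      · rw [← Finset.mul_prod_erase (Finset.univ.erase M) _ hRmem, hfR w, h3]
    have hCPr : ∀ m y, CPr (F.doJoint M m) {v | v Y = y} {v | v R = r0} = A m y := by
      intro m y
      rw [CPr, hnum m y, hden m, mul_comm, mul_div_assoc, div_self (hpRpos r0).ne', mul_one]
    simp only [hCPr]
    -- now a purely combinatorial regrouping
    have expand : ∀ m y, val y * (A m y * C m)
        = ∑ w : V → S, (if w Y = y ∧ w M = m ∧ w R = r0 then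
            val y * (((∏ i ∈ (Finset.univ.erase M).erase R, F.f i w)) * C m) else 0) := by
      intro m y
      rw [hA, Finset.sum_mul, Finset.mul_sum]
      refine Finset.sum_congr rfl fun w _ => ?_
      split_ifs <;> ring
    have hcollapse : ∀ w : V → S,
        (∑ m : S, ∑ y : S, (if w Y = y ∧ w M = m ∧ w R = r0 then
            val y * (((∏ i ∈ (Finset.univ.erase M).erase R, F.f i w)) * C m) else 0))
        = val (w Y) * (if w R = r0 then
            (∏ i ∈ (Finset.univ.erase M).erase R, F.f i w) * C (w M) else 0) := by
      intro w
      simp only [ite_and, Finset.sum_ite_eq, Finset.mem_univ, if_true]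
      split_ifs <;> ring
    calc (∑ v : V → S, val (v Y) *
          (if v R = r0 then
              (∏ i ∈ (Finset.univ.erase M).erase R, F.f i v) *
                CPr F.joint {w | w M = v M} {w | w R = r1}
            else 0))
        = ∑ w : V → S, ∑ m : S, ∑ y : S,
            (if w Y = y ∧ w M = m ∧ w R = r0 then
              val y * (((∏ i ∈ (Finset.univ.erase M).erase R, F.f i w)) * C m) else 0) := by
          exact Finset.sum_congr rfl fun w _ => (hcollapse w).symm
      _ = ∑ m : S, ∑ y : S, val y * (A m y * C m) := by
          rw [Finset.sum_comm]
          refine Finset.sum_congr rfl fun m _ => ?_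
          rw [Finset.sum_comm]
          exact Finset.sum_congr rfl fun y _ => (expand m y).symm


end Formal
end

section
/- If B_M is an admissible set for (M, Y) given R (i.e., P(Y|do(m),R=0) = Σ_b P(Y|m,b,R=0)P(b|R=0)), then the adjusted effect admits the plug-in representation δ_M = Σ_{b,m} E[Y | m, b, R=0]·P(b | R=0)·P(m | R=1) − E[Y | R=0], and this quantity is a functional only of the observational distribution P(R, B_M, M, Y). -/
open Finset

namespace Formal

variable {V : Type} [Fintype V] [DecidableEq V] {S : Type} [Fintype S] [DecidableEq S]

variable {E : V → V → Prop}

/-- Mean of the adjusted counterfactual `Y(R = r₀, G_{M|R=r₁})`: `R` is fixed to `r₀`,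
the mechanism of `M` is replaced by an independent draw from `P(M | R = r₁)`
(`= P(M | do(R = r₁))` since `R` is a root), and all other mechanisms are kept. -/
noncomputable def adjExp (F : FactorSystem E S) (M R Y : V) (r0 r1 : S)
    (val : S → ℝ) : ℝ :=
  ∑ v : V → S, val (v Y) *
    (if v R = r0 then
        (∏ i ∈ (Finset.univ.erase M).erase R, F.f i v) *
          CPr F.joint {w | w M = v M} {w | w R = r1}
      else 0)

/-- Mean of `Y(R = r₀)` (`= E[Y | R = r₀]` since `R` is a root). -/
noncomputable def baseExp (F : FactorSystem E S) (R Y : V) (r0 : S) (val : S → ℝ) : ℝ :=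
  ∑ y : S, val y * CPr F.joint {v | v Y = y} {v | v R = r0}

/-- The adjusted effect `δ_M`. -/
noncomputable def deltaEff (F : FactorSystem E S) (M R Y : V) (r0 r1 : S)
    (val : S → ℝ) : ℝ :=
  adjExp F M R Y r0 r1 val - baseExp F R Y r0 val

lemma exists_sink (hacyc : ∀ v, ¬ Relation.TransGen E v v) (T : Finset V) (hT : T.Nonempty) :
    ∃ i ∈ T, ∀ j ∈ T, ¬ E i j := by
  classical
  induction T using Finset.strongInduction with
  | _ T ih =>
    obtain ⟨a, ha⟩ := hT
    by_cases h : ∀ j ∈ T, ¬ Relation.TransGen E a j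
    · exact ⟨a, ha, fun j hj hE => h j hj (Relation.TransGen.single hE)⟩
    · push_neg at h
      obtain ⟨j0, hj0, hE0⟩ := h
      set T' := T.filter (fun x => Relation.TransGen E a x) with hT'
      have hsub : T' ⊂ T := by
        refine Finset.ssubset_iff_of_subset (Finset.filter_subset _ _) |>.mpr ⟨a, ha, ?_⟩
        simp only [hT', Finset.mem_filter]
        exact fun h => hacyc a h.2
      have hne : T'.Nonempty := ⟨j0, by simp [hT', hj0, hE0]⟩
      obtain ⟨i, hiT', hi⟩ := ih T' hsub hne
      have hiT : i ∈ T := (Finset.filter_subset _ _) hiT'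
      have hai : Relation.TransGen E a i := (Finset.mem_filter.mp hiT').2
      refine ⟨i, hiT, fun j hj hE => ?_⟩
      exact hi j (Finset.mem_filter.mpr ⟨hj, hai.tail hE⟩) hE

lemma sum_swap_coord (i : V) (s t : S) (φ : (V → S) → ℝ) :
    ∑ w : V → S, (if w i = s then φ w else 0)
      = ∑ w : V → S, (if w i = t then φ (Function.update w i s) else 0) := by
  classical
  have hinv : ∀ w : V → S,
      (fun w : V → S => Function.update w i (Equiv.swap s t (w i)))
        ((fun w : V → S => Function.update w i (Equiv.swap s t (w i))) w) = w := by
    intro w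
    simp [Function.update_self, Function.update_idem, Equiv.swap_apply_self]
  have hbij : Function.Bijective (fun w : V → S => Function.update w i (Equiv.swap s t (w i))) :=
    Function.bijective_iff_has_inverse.mpr
      ⟨fun w : V → S => Function.update w i (Equiv.swap s t (w i)), hinv, hinv⟩
  refine (Fintype.sum_bijective _ hbij _ _ ?_).symm
  intro w
  by_cases h : w i = t
  · have hs : Equiv.swap s t (w i) = s := by rw [h]; exact Equiv.swap_apply_right s t
    simp [h, hs, Function.update_idem]
  · have h2 : Equiv.swap s t (w i) ≠ s := by
      intro hc
      apply h
      have := congrArg (Equiv.swap s t) hc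
      simpa using this
    simp [h, h2]

lemma norm_sum (F : FactorSystem E S) (hacyc : ∀ v, ¬ Relation.TransGen E v v) :
    ∀ (T : Finset V) (v : V → S),
      ∑ w : V → S, (if ∀ j ∉ T, w j = v j then ∏ k ∈ T, F.f k w else 0) = 1 := by
  classical
  intro T
  induction T using Finset.strongInduction with
  | _ T ih =>
    intro v
    rcases T.eq_empty_or_nonempty with rfl | hT
    · have hiff : ∀ w : V → S, (∀ j ∉ (∅ : Finset V), w j = v j) ↔ w = v := by
        intro w; simp [funext_iff]
      calc ∑ w : V → S, (if ∀ j ∉ (∅ : Finset V), w j = v j then ∏ k ∈ (∅ : Finset V), F.f k w else 0)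
          = ∑ w : V → S, (if w = v then 1 else 0) := by
            refine Finset.sum_congr rfl fun w _ => ?_
            rw [if_congr (hiff w) (Finset.prod_empty) rfl]
        _ = 1 := by simp
    · obtain ⟨i, hiT, hsink⟩ := exists_sink hacyc T hT
      have hTsub : T.erase i ⊂ T := Finset.erase_ssubset hiT
      have step1 : (∑ w : V → S, (if ∀ j ∉ T, w j = v j then ∏ k ∈ T, F.f k w else 0))
          = ∑ s : S, ∑ w : V → S,
              (if w i = s then (if ∀ j ∉ T, w j = v j then ∏ k ∈ T, F.f k w else 0) else 0) := by
        rw [Finset.sum_comm]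
        refine Finset.sum_congr rfl fun w _ => ?_
        rw [Finset.sum_ite_eq]; simp
      have step2 : ∀ s : S, (∑ w : V → S,
            (if w i = s then (if ∀ j ∉ T, w j = v j then ∏ k ∈ T, F.f k w else 0) else 0))
          = ∑ w : V → S, (if w i = v i then
              (if ∀ j ∉ T, w j = v j then
                F.f i (Function.update w i s) * ∏ k ∈ T.erase i, F.f k w else 0) else 0) := by
        intro s
        rw [sum_swap_coord i s (v i)]
        refine Finset.sum_congr rfl fun w _ => ?_
        by_cases hw : w i = v i
        · simp only [hw, if_true]
          have hcond : (∀ j ∉ T, Function.update w i s j = v j) ↔ (∀ j ∉ T, w j = v j) := by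
            constructor <;> intro h j hj
            · have hji : j ≠ i := by rintro rfl; exact hj hiT
              have := h j hj; rwa [Function.update_of_ne hji] at this
            · have hji : j ≠ i := by rintro rfl; exact hj hiT
              rw [Function.update_of_ne hji]; exact h j hj
          rw [if_congr hcond rfl rfl]
          by_cases hc : ∀ j ∉ T, w j = v j
          · rw [if_pos hc, if_pos hc]
            rw [← Finset.mul_prod_erase T _ hiT]
            congr 1
            refine Finset.prod_congr rfl fun k hk => ?_
            have hki : k ≠ i := (Finset.mem_erase.mp hk).1
            refine F.localDep k _ _ (Function.update_of_ne hki _ _) fun j hj => ?_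
            have hji : j ≠ i := by
              rintro rfl; exact hsink k ((Finset.mem_erase.mp hk).2) hj
            exact Function.update_of_ne hji _ _
          · simp [hc]
        · simp [hw]
      rw [step1]
      rw [Finset.sum_congr rfl fun s _ => step2 s]
      rw [Finset.sum_comm]
      have step3 : ∀ w : V → S, (∑ s : S, if w i = v i then
            (if ∀ j ∉ T, w j = v j then
              F.f i (Function.update w i s) * ∏ k ∈ T.erase i, F.f k w else 0) else 0)
          = (if ∀ j ∉ T.erase i, w j = v j then ∏ k ∈ T.erase i, F.f k w else 0) := by
        intro w
        have hcond : (∀ j ∉ T.erase i, w j = v j) ↔ (w i = v i ∧ ∀ j ∉ T, w j = v j) := by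
          constructor
          · intro h
            exact ⟨h i (by simp), fun j hj => h j fun hh => hj (Finset.mem_of_mem_erase hh)⟩
          · rintro ⟨hh1, hh2⟩ j hj
            by_cases hji : j = i
            · subst hji; exact hh1
            · exact hh2 j fun hjT => hj (Finset.mem_erase.mpr ⟨hji, hjT⟩)
        by_cases h1 : w i = v i
        · by_cases h2 : ∀ j ∉ T, w j = v j
          · rw [if_pos (hcond.mpr ⟨h1, h2⟩)]
            calc (∑ s : S, if w i = v i then
                  (if ∀ j ∉ T, w j = v j then
                    F.f i (Function.update w i s) * ∏ k ∈ T.erase i, F.f k w else 0) else 0)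
                = ∑ s : S, F.f i (Function.update w i s) * ∏ k ∈ T.erase i, F.f k w := by
                  refine Finset.sum_congr rfl fun s _ => ?_
                  rw [if_pos h1, if_pos h2]
              _ = _ := by rw [← Finset.sum_mul, F.normalized, one_mul]
          · rw [if_neg (fun hh => h2 (hcond.mp hh).2)]
            refine Finset.sum_eq_zero fun s _ => ?_
            rw [if_pos h1, if_neg h2]
        · rw [if_neg (fun hh => h1 (hcond.mp hh).1)]
          refine Finset.sum_eq_zero fun s _ => ?_
          rw [if_neg h1]
      rw [Finset.sum_congr rfl fun w _ => step3 w]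
      exact ih (T.erase i) hTsub v

lemma Pr_def (P : (V → S) → ℝ) (p : (V → S) → Prop) [DecidablePred p] :
    Pr P {v | p v} = ∑ v : V → S, if p v then P v else 0 := by
  unfold Pr
  refine Finset.sum_congr rfl fun v _ => ?_
  by_cases h : p v <;> simp [Set.indicator_apply, h]

lemma Pr_slice {ι : Type} [Fintype ι] [DecidableEq ι] (P : (V → S) → ℝ)
    (A : Set (V → S)) (κ : (V → S) → ι) :
    ∑ t : ι, Pr P {v | v ∈ A ∧ κ v = t} = Pr P A := by
  classical
  unfold Pr
  rw [Finset.sum_comm]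
  refine Finset.sum_congr rfl fun v _ => ?_
  by_cases h : v ∈ A
  · have : ∀ t : ι, ({v | v ∈ A ∧ κ v = t}).indicator P v = if κ v = t then P v else 0 := by
      intro t
      by_cases ht : κ v = t <;> simp [Set.indicator_apply, h, ht]
    rw [Finset.sum_congr rfl fun t _ => this t, Finset.sum_ite_eq]
    simp [Set.indicator_apply, h]
  · have : ∀ t : ι, ({v | v ∈ A ∧ κ v = t}).indicator P v = 0 := by
      intro t; simp [Set.indicator_apply, h]
    rw [Finset.sum_congr rfl fun t _ => this t]
    simp [Set.indicator_apply, h]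

lemma Pr_pos (P : (V → S) → ℝ) (hP : ∀ v, 0 < P v) (A : Set (V → S))
    (v0 : V → S) (h0 : v0 ∈ A) : 0 < Pr P A := by
  classical
  refine Finset.sum_pos' (fun v _ => Set.indicator_nonneg (fun v _ => (hP v).le) v) ?_
  exact ⟨v0, Finset.mem_univ _, by simpa [Set.indicator_apply, h0] using hP v0⟩

lemma fpos (F : FactorSystem E S) (hpos : ∀ v, 0 < F.joint v) (i : V) (v : V → S) :
    0 < F.f i v := by
  rcases (F.nonneg i v).lt_or_eq with h | h
  · exact h
  · exfalso
    have := hpos v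
    rw [FactorSystem.joint, Finset.prod_eq_zero (Finset.mem_univ i) h.symm] at this
    exact lt_irrefl 0 this

lemma root_const (F : FactorSystem E S) (R : V) (hroot : ∀ j, ¬ E j R)
    (v w : V → S) (h : v R = w R) : F.f R v = F.f R w :=
  F.localDep R v w h (fun j hj => absurd hj (hroot j))

lemma notmem_TS {M R j : V} : j ∉ (Finset.univ.erase M).erase R ↔ (j = R ∨ j = M) := by
  simp only [Finset.mem_erase, Finset.mem_univ, and_true, not_and, ne_eq, not_not]
  constructor
  · intro h
    by_cases hR : j = R
    · exact Or.inl hR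
    · exact Or.inr (h hR)
  · rintro (rfl | rfl)
    · intro h; exact absurd rfl h
    · intro _; rfl

lemma doCPr_ne (F : FactorSystem E S) (hacyc : ∀ v, ¬ Relation.TransGen E v v)
    (M R Y : V) (hroot : ∀ j, ¬ E j R) (hMR : M ≠ R) (r0 m y : S)
    (hpos : ∀ v, 0 < F.joint v) :
    CPr (F.doJoint M m) {v | v Y = y} {v | v R = r0}
      = ∑ v : V → S, if v M = m ∧ v R = r0 ∧ v Y = y then
          ∏ i ∈ (Finset.univ.erase M).erase R, F.f i v else 0 := by
  classical
  set c : ℝ := F.f R (fun _ => r0) with hcdef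
  have hc : 0 < c := fpos F hpos R _
  have hcR : ∀ v : V → S, v R = r0 → F.f R v = c := fun v h =>
    root_const F R hroot v _ h
  have hRmem : R ∈ Finset.univ.erase M := Finset.mem_erase.mpr ⟨Ne.symm hMR, Finset.mem_univ R⟩
  have hsplit : ∀ v : V → S, v R = r0 →
      ∏ i ∈ Finset.univ.erase M, F.f i v
        = c * ∏ i ∈ (Finset.univ.erase M).erase R, F.f i v := by
    intro v hv
    rw [← Finset.mul_prod_erase _ _ hRmem, hcR v hv]
  have hnum : Pr (F.doJoint M m) ({v | v Y = y} ∩ {v | v R = r0})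
      = c * ∑ v : V → S, (if v M = m ∧ v R = r0 ∧ v Y = y then
          ∏ i ∈ (Finset.univ.erase M).erase R, F.f i v else 0) := by
    have hset : ({v : V → S | v Y = y} ∩ {v | v R = r0}) = {v | v Y = y ∧ v R = r0} := rfl
    rw [hset, Pr_def, Finset.mul_sum]
    refine Finset.sum_congr rfl fun v _ => ?_
    unfold FactorSystem.doJoint
    by_cases h1 : v M = m
    · by_cases h2 : v R = r0
      · by_cases h3 : v Y = y
        · simp only [h1, h2, h3, and_self, if_true, true_and]
          exact hsplit v h2
        · simp [h1, h2, h3]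
      · simp [h1, h2]
    · simp [h1]
  have hden : Pr (F.doJoint M m) {v | v R = r0} = c := by
    have h1 : Pr (F.doJoint M m) {v | v R = r0}
        = c * ∑ v : V → S, (if v M = m ∧ v R = r0 then
            ∏ i ∈ (Finset.univ.erase M).erase R, F.f i v else 0) := by
      rw [Pr_def, Finset.mul_sum]
      refine Finset.sum_congr rfl fun v _ => ?_
      unfold FactorSystem.doJoint
      by_cases h1 : v M = m
      · by_cases h2 : v R = r0
        · simp only [h1, h2, and_self, if_true, true_and]
          exact hsplit v h2
        · simp [h1, h2]
      · simp [h1]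
    have hZ : ∑ v : V → S, (if v M = m ∧ v R = r0 then
        ∏ i ∈ (Finset.univ.erase M).erase R, F.f i v else 0) = 1 := by
      have v0def : (Function.update (fun _ : V => r0) M m) R = r0 :=
        Function.update_of_ne (Ne.symm hMR) _ _
      have := norm_sum F hacyc ((Finset.univ.erase M).erase R) (Function.update (fun _ : V => r0) M m)
      rw [← this]
      refine Finset.sum_congr rfl fun w _ => ?_
      have hiff : (w M = m ∧ w R = r0) ↔
          (∀ j ∉ (Finset.univ.erase M).erase R, w j = Function.update (fun _ : V => r0) M m j) := by
        constructor
        · rintro ⟨h1, h2⟩ j hj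
          rcases notmem_TS.mp hj with rfl | rfl
          · rw [v0def]; exact h2
          · rw [Function.update_self]; exact h1
        · intro h
          constructor
          · have := h M (notmem_TS.mpr (Or.inr rfl)); rwa [Function.update_self] at this
          · have := h R (notmem_TS.mpr (Or.inl rfl)); rwa [v0def] at this
      rw [if_congr hiff rfl rfl]
    rw [h1, hZ, mul_one]
  rw [CPr, hnum, hden, mul_comm, mul_div_assoc, div_self (ne_of_gt hc), mul_one]

lemma lemA (F : FactorSystem E S) (hacyc : ∀ v, ¬ Relation.TransGen E v v)
    (M R Y : V) (hroot : ∀ j, ¬ E j R) (r0 r1 : S) (val : S → ℝ)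
    (hpos : ∀ v, 0 < F.joint v) :
    adjExp F M R Y r0 r1 val
      = ∑ m : S, CPr F.joint {v | v M = m} {v | v R = r1} *
          ∑ y : S, val y * CPr (F.doJoint M m) {v | v Y = y} {v | v R = r0} := by
  classical
  by_cases hMR : M = R
  · subst hMR
    -- here the vertex names: M is used for both
    have hCPrRR : ∀ m r' : S, CPr F.joint {v | v M = m} {v | v M = r'}
        = if m = r' then 1 else 0 := by
      intro m r'
      have hden : 0 < Pr F.joint {v : V → S | v M = r'} :=
        Pr_pos _ hpos _ (fun _ => r') rfl
      have hset : ({v : V → S | v M = m} ∩ {v | v M = r'}) = {v | v M = m ∧ v M = r'} := rfl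
      by_cases hm : m = r'
      · subst hm
        rw [CPr, hset, if_pos rfl]
        have : ({v : V → S | v M = m ∧ v M = m}) = {v | v M = m} := by
          ext v; simp
        rw [this, div_self (ne_of_gt hden)]
      · rw [CPr, hset, if_neg hm]
        have : ({v : V → S | v M = m ∧ v M = r'}) = (∅ : Set (V → S)) := by
          ext v
          simp only [Set.mem_setOf_eq, Set.mem_empty_iff_false, iff_false, not_and]
          rintro rfl h; exact hm h
        rw [this]
        have : Pr F.joint (∅ : Set (V → S)) = 0 := by
          unfold Pr; simp
        rw [this, zero_div]
    have hRHS : (∑ m : S, CPr F.joint {v | v M = m} {v | v M = r1} *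
          ∑ y : S, val y * CPr (F.doJoint M m) {v | v Y = y} {v | v M = r0})
        = ∑ y : S, val y * CPr (F.doJoint M r1) {v | v Y = y} {v | v M = r0} := by
      rw [Finset.sum_congr rfl fun m _ => by
        rw [hCPrRR m r1, ite_mul, one_mul, zero_mul]]
      rw [Finset.sum_ite_eq']
      simp
    have hLHS : adjExp F M M Y r0 r1 val
        = CPr F.joint {w : V → S | w M = r0} {w | w M = r1} *
            ∑ v : V → S, (if v M = r0 then val (v Y) * ∏ i ∈ Finset.univ.erase M, F.f i v else 0) := by
      unfold adjExp
      rw [Finset.mul_sum]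
      refine Finset.sum_congr rfl fun v _ => ?_
      by_cases h : v M = r0
      · have hsetv : ({w : V → S | w M = v M}) = {w | w M = r0} := by rw [h]
        rw [if_pos h, if_pos h, hsetv, Finset.erase_idem]
        ring
      · rw [if_neg h, if_neg h, mul_zero, mul_zero]
    rw [hRHS, hLHS, hCPrRR r0 r1]
    by_cases hr : r0 = r1
    · subst hr
      rw [if_pos rfl, one_mul]
      have hden1 : Pr (F.doJoint M r0) {v : V → S | v M = r0} = 1 := by
        rw [Pr_def]
        have h1 : ∀ v : V → S, (if v M = r0 then F.doJoint M r0 v else 0)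
            = if v M = r0 then ∏ i ∈ Finset.univ.erase M, F.f i v else 0 := by
          intro v
          unfold FactorSystem.doJoint
          by_cases h : v M = r0 <;> simp [h]
        rw [Finset.sum_congr rfl fun v _ => h1 v]
        have := norm_sum F hacyc (Finset.univ.erase M) (fun _ => r0)
        rw [← this]
        refine Finset.sum_congr rfl fun w _ => ?_
        have hiff : (w M = r0) ↔ (∀ j ∉ Finset.univ.erase M, w j = (fun _ : V => r0) j) := by
          constructor
          · intro h j hj
            have : j = M := by
              by_contra hne
              exact hj (Finset.mem_erase.mpr ⟨hne, Finset.mem_univ j⟩)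
            subst this; exact h
          · intro h
            exact h M (fun hh => (Finset.mem_erase.mp hh).1 rfl)
        rw [if_congr hiff rfl rfl]
      have hnum1 : ∀ y : S, Pr (F.doJoint M r0) ({v : V → S | v Y = y} ∩ {v | v M = r0})
          = ∑ v : V → S, (if v M = r0 ∧ v Y = y then
              ∏ i ∈ Finset.univ.erase M, F.f i v else 0) := by
        intro y
        have hset : ({v : V → S | v Y = y} ∩ {v | v M = r0}) = {v | v Y = y ∧ v M = r0} := rfl
        rw [hset, Pr_def]
        refine Finset.sum_congr rfl fun v _ => ?_
        unfold FactorSystem.doJoint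
        by_cases h1 : v M = r0
        · by_cases h2 : v Y = y <;> simp [h1, h2]
        · simp [h1, fun h : v M = r0 ∧ v Y = y => h1 h.1]
      have hC : ∀ y : S, CPr (F.doJoint M r0) {v | v Y = y} {v | v M = r0}
          = ∑ v : V → S, (if v M = r0 ∧ v Y = y then
              ∏ i ∈ Finset.univ.erase M, F.f i v else 0) := by
        intro y
        rw [CPr, hnum1 y, hden1, div_one]
      symm
      rw [Finset.sum_congr rfl fun y _ => by rw [hC y, Finset.mul_sum]]
      rw [Finset.sum_comm]
      refine Finset.sum_congr rfl fun v _ => ?_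
      by_cases h : v M = r0
      · rw [if_pos h]
        have h2 : ∀ y : S, (val y * if v M = r0 ∧ v Y = y then
              ∏ i ∈ Finset.univ.erase M, F.f i v else 0)
            = if v Y = y then val (v Y) * ∏ i ∈ Finset.univ.erase M, F.f i v else 0 := by
          intro y
          by_cases hy : v Y = y
          · subst hy; simp [h]
          · simp [hy, fun hh : v M = r0 ∧ v Y = y => hy hh.2]
        rw [Finset.sum_congr rfl fun y _ => h2 y, Finset.sum_ite_eq]
        simp
      · rw [if_neg h]
        refine Finset.sum_eq_zero fun y _ => ?_
        rw [if_neg (fun hh : v M = r0 ∧ v Y = y => h hh.1), mul_zero]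
    · rw [if_neg hr, zero_mul]
      refine (Finset.sum_eq_zero fun y _ => ?_).symm
      have hden0 : Pr (F.doJoint M r1) {v : V → S | v M = r0} = 0 := by
        rw [Pr_def]
        refine Finset.sum_eq_zero fun v _ => ?_
        unfold FactorSystem.doJoint
        by_cases h : v M = r0
        · rw [if_pos h, if_neg (by rw [h]; exact fun hh => hr hh)]
        · rw [if_neg h]
      rw [CPr, hden0, div_zero, mul_zero]
  · -- main case M ≠ R
    have hrw : ∀ m : S, (∑ y : S, val y * CPr (F.doJoint M m) {v | v Y = y} {v | v R = r0})
        = ∑ v : V → S, (if v M = m ∧ v R = r0 then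
            val (v Y) * ∏ i ∈ (Finset.univ.erase M).erase R, F.f i v else 0) := by
      intro m
      rw [Finset.sum_congr rfl fun y _ => by
        rw [doCPr_ne F hacyc M R Y hroot hMR r0 m y hpos, Finset.mul_sum]]
      rw [Finset.sum_comm]
      refine Finset.sum_congr rfl fun v _ => ?_
      by_cases h1 : v M = m ∧ v R = r0
      · have : ∀ y : S, (val y * if v M = m ∧ v R = r0 ∧ v Y = y then
            ∏ i ∈ (Finset.univ.erase M).erase R, F.f i v else 0)
            = if v Y = y then val (v Y) * ∏ i ∈ (Finset.univ.erase M).erase R, F.f i v else 0 := by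
          intro y
          by_cases hy : v Y = y
          · subst hy; simp [h1.1, h1.2]
          · simp [hy, fun h : v M = m ∧ v R = r0 ∧ v Y = y => hy h.2.2]
        rw [Finset.sum_congr rfl fun y _ => this y, if_pos h1, Finset.sum_ite_eq]
        simp
      · rw [if_neg h1]
        refine Finset.sum_eq_zero fun y _ => ?_
        rw [if_neg (fun h : v M = m ∧ v R = r0 ∧ v Y = y => h1 ⟨h.1, h.2.1⟩), mul_zero]
    rw [Finset.sum_congr rfl fun m _ => by rw [hrw m, Finset.mul_sum]]
    unfold adjExp
    rw [Finset.sum_comm]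
    refine Finset.sum_congr rfl fun v _ => ?_
    have key : ∀ m : S, CPr F.joint {v | v M = m} {v | v R = r1} *
        (if v M = m ∧ v R = r0 then
          val (v Y) * ∏ i ∈ (Finset.univ.erase M).erase R, F.f i v else 0)
        = if v M = m then (val (v Y) *
            if v R = r0 then (∏ i ∈ (Finset.univ.erase M).erase R, F.f i v) *
              CPr F.joint {w | w M = v M} {w | w R = r1} else 0) else 0 := by
      intro m
      by_cases h1 : v M = m
      · subst h1
        by_cases h2 : v R = r0
        · simp only [h2, and_self, if_true, true_and]
          ring
        · simp [h2]
      · simp [h1, fun h : v M = m ∧ v R = r0 => h1 h.1]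
    rw [Finset.sum_congr rfl fun m _ => key m, Finset.sum_ite_eq]
    simp

lemma plugin (F : FactorSystem E S) (hacyc : ∀ v, ¬ Relation.TransGen E v v)
    (M R Y : V) (hroot : ∀ j, ¬ E j R) (B : Finset V) (r0 r1 : S) (val : S → ℝ)
    (hpos : ∀ v, 0 < F.joint v)
    (hadm : ∀ (y m : S), CPr (F.doJoint M m) {v | v Y = y} {v | v R = r0} =
      ∑ b : (↑B : Set V) → S,
        CPr F.joint {v | v Y = y}
            {v | v M = m ∧ v R = r0 ∧ ∀ j : (↑B : Set V), v j = b j} *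
          CPr F.joint {v | ∀ j : (↑B : Set V), v j = b j} {v | v R = r0}) :
    deltaEff F M R Y r0 r1 val =
      (∑ b : (↑B : Set V) → S, ∑ m : S,
        (∑ y : S, val y *
            CPr F.joint {v | v Y = y}
              {v | v M = m ∧ v R = r0 ∧ ∀ j : (↑B : Set V), v j = b j}) *
          CPr F.joint {v | ∀ j : (↑B : Set V), v j = b j} {v | v R = r0} *
          CPr F.joint {v | v M = m} {v | v R = r1}) -
        ∑ y : S, val y * CPr F.joint {v | v Y = y} {v | v R = r0} := by
  classical
  unfold deltaEff baseExp
  congr 1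
  rw [lemA F hacyc M R Y hroot r0 r1 val hpos]
  rw [Finset.sum_congr rfl fun m _ => by
    rw [Finset.sum_congr rfl fun y _ => by rw [hadm y m]]]
  simp only [Finset.mul_sum, Finset.sum_mul]
  rw [Finset.sum_congr rfl fun m _ => Finset.sum_comm]
  rw [Finset.sum_comm]
  refine Finset.sum_congr rfl fun b _ => Finset.sum_congr rfl fun m _ =>
    Finset.sum_congr rfl fun y _ => ?_
  ring

noncomputable def plugF (B : Finset V) (r0 r1 : S) (val : S → ℝ)
    (p : S → S → S → ((↑B : Set V) → S) → ℝ) : ℝ :=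
  (∑ b : (↑B : Set V) → S, ∑ m : S,
    (∑ y : S, val y * (p r0 m y b / ∑ y' : S, p r0 m y' b)) *
      ((∑ m' : S, ∑ y' : S, p r0 m' y' b) /
        (∑ b' : (↑B : Set V) → S, ∑ m' : S, ∑ y' : S, p r0 m' y' b')) *
      ((∑ b' : (↑B : Set V) → S, ∑ y' : S, p r1 m y' b') /
        (∑ b' : (↑B : Set V) → S, ∑ m' : S, ∑ y' : S, p r1 m' y' b'))) -
   ∑ y : S, val y * ((∑ b' : (↑B : Set V) → S, ∑ m' : S, p r0 m' y b') /
        (∑ b' : (↑B : Set V) → S, ∑ m' : S, ∑ y' : S, p r0 m' y' b'))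

lemma plugin_marg (F : FactorSystem E S) (M R Y : V) (B : Finset V)
    (r0 r1 : S) (val : S → ℝ) :
    (∑ b : (↑B : Set V) → S, ∑ m : S,
        (∑ y : S, val y *
            CPr F.joint {v | v Y = y}
              {v | v M = m ∧ v R = r0 ∧ ∀ j : (↑B : Set V), v j = b j}) *
          CPr F.joint {v | ∀ j : (↑B : Set V), v j = b j} {v | v R = r0} *
          CPr F.joint {v | v M = m} {v | v R = r1}) -
        (∑ y : S, val y * CPr F.joint {v | v Y = y} {v | v R = r0})
      = plugF B r0 r1 val
          (fun r m y b => Pr F.joint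
            {v | v R = r ∧ v M = m ∧ v Y = y ∧ ∀ j : (↑B : Set V), v j = b j}) := by
  classical
  set p : S → S → S → ((↑B : Set V) → S) → ℝ :=
    fun r m y b => Pr F.joint
      {v | v R = r ∧ v M = m ∧ v Y = y ∧ ∀ j : (↑B : Set V), v j = b j} with hp
  have slY : ∀ (A : Set (V → S)), Pr F.joint A = ∑ y : S, Pr F.joint {v | v ∈ A ∧ v Y = y} :=
    fun A => (Pr_slice F.joint A (fun v => v Y)).symm
  have slM : ∀ (A : Set (V → S)), Pr F.joint A = ∑ m : S, Pr F.joint {v | v ∈ A ∧ v M = m} :=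
    fun A => (Pr_slice F.joint A (fun v => v M)).symm
  have slB : ∀ (A : Set (V → S)), Pr F.joint A
      = ∑ b : (↑B : Set V) → S, Pr F.joint {v | v ∈ A ∧ (fun j : (↑B : Set V) => v j) = b} :=
    fun A => (Pr_slice F.joint A (fun v => fun j : (↑B : Set V) => v j)).symm
  -- identities
  have hA : ∀ (m y : S) (b : (↑B : Set V) → S),
      Pr F.joint ({v | v Y = y} ∩ {v | v M = m ∧ v R = r0 ∧ ∀ j : (↑B : Set V), v j = b j})
        = p r0 m y b := by
    intro m y b
    rw [hp]
    congr 1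
    ext v
    simp only [Set.mem_inter_iff, Set.mem_setOf_eq]
    tauto
  have hB : ∀ (m : S) (b : (↑B : Set V) → S),
      Pr F.joint {v | v M = m ∧ v R = r0 ∧ ∀ j : (↑B : Set V), v j = b j}
        = ∑ y' : S, p r0 m y' b := by
    intro m b
    rw [slY]
    refine Finset.sum_congr rfl fun y _ => ?_
    rw [hp]
    congr 1
    ext v
    simp only [Set.mem_setOf_eq]
    tauto
  have hC : ∀ (b : (↑B : Set V) → S),
      Pr F.joint ({v | ∀ j : (↑B : Set V), v j = b j} ∩ {v | v R = r0})
        = ∑ m' : S, ∑ y' : S, p r0 m' y' b := by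
    intro b
    rw [slM]
    refine Finset.sum_congr rfl fun m _ => ?_
    rw [slY]
    refine Finset.sum_congr rfl fun y _ => ?_
    rw [hp]
    congr 1
    ext v
    simp only [Set.mem_inter_iff, Set.mem_setOf_eq]
    tauto
  have hD : ∀ (r : S), Pr F.joint {v : V → S | v R = r}
      = ∑ b' : (↑B : Set V) → S, ∑ m' : S, ∑ y' : S, p r m' y' b' := by
    intro r
    rw [slB]
    refine Finset.sum_congr rfl fun b _ => ?_
    rw [slM]
    refine Finset.sum_congr rfl fun m _ => ?_
    rw [slY]
    refine Finset.sum_congr rfl fun y _ => ?_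
    rw [hp]
    congr 1
    ext v
    simp only [Set.mem_setOf_eq, funext_iff]
    tauto
  have hE : ∀ (m : S), Pr F.joint ({v : V → S | v M = m} ∩ {v | v R = r1})
      = ∑ b' : (↑B : Set V) → S, ∑ y' : S, p r1 m y' b' := by
    intro m
    rw [slB]
    refine Finset.sum_congr rfl fun b _ => ?_
    rw [slY]
    refine Finset.sum_congr rfl fun y _ => ?_
    rw [hp]
    congr 1
    ext v
    simp only [Set.mem_inter_iff, Set.mem_setOf_eq, funext_iff]
    tauto
  have hF : ∀ (y : S), Pr F.joint ({v : V → S | v Y = y} ∩ {v | v R = r0})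
      = ∑ b' : (↑B : Set V) → S, ∑ m' : S, p r0 m' y b' := by
    intro y
    rw [slB]
    refine Finset.sum_congr rfl fun b _ => ?_
    rw [slM]
    refine Finset.sum_congr rfl fun m _ => ?_
    rw [hp]
    congr 1
    ext v
    simp only [Set.mem_inter_iff, Set.mem_setOf_eq, funext_iff]
    tauto
  unfold plugF
  congr 1
  · refine Finset.sum_congr rfl fun b _ => Finset.sum_congr rfl fun m _ => ?_
    rw [show CPr F.joint {v | ∀ j : (↑B : Set V), v j = b j} {v | v R = r0}
        = (∑ m' : S, ∑ y' : S, p r0 m' y' b) /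
            (∑ b' : (↑B : Set V) → S, ∑ m' : S, ∑ y' : S, p r0 m' y' b') from by
      rw [CPr, hC b, hD r0]]
    rw [show CPr F.joint {v : V → S | v M = m} {v | v R = r1}
        = (∑ b' : (↑B : Set V) → S, ∑ y' : S, p r1 m y' b') /
            (∑ b' : (↑B : Set V) → S, ∑ m' : S, ∑ y' : S, p r1 m' y' b') from by
      rw [CPr, hE m, hD r1]]
    congr 1
    congr 1
    refine Finset.sum_congr rfl fun y _ => ?_
    rw [CPr, hA m y b, hB m b]
  · refine Finset.sum_congr rfl fun y _ => ?_
    rw [CPr, hF y, hD r0]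

/-- if `B` is admissible for `(M, Y)` given `R` (back-door adjustment
identity at `R = r₀`), then the adjusted effect `δ_M` admits the plug-in representation,
and it is a functional only of the observational distribution of `(R, B, M, Y)`. -/
theorem stmt19
    (hacyc : ∀ v, ¬ Relation.TransGen E v v)
    (M R Y : V) (hroot : ∀ j, ¬ E j R)
    (B : Finset V) (r0 r1 : S) (val : S → ℝ)
    (F F' : FactorSystem E S)
    (hpos : ∀ v, 0 < F.joint v) (hpos' : ∀ v, 0 < F'.joint v)
    (hadm : ∀ (y m : S), CPr (F.doJoint M m) {v | v Y = y} {v | v R = r0} =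
      ∑ b : (↑B : Set V) → S,
        CPr F.joint {v | v Y = y}
            {v | v M = m ∧ v R = r0 ∧ ∀ j : (↑B : Set V), v j = b j} *
          CPr F.joint {v | ∀ j : (↑B : Set V), v j = b j} {v | v R = r0})
    (hadm' : ∀ (y m : S), CPr (F'.doJoint M m) {v | v Y = y} {v | v R = r0} =
      ∑ b : (↑B : Set V) → S,
        CPr F'.joint {v | v Y = y}
            {v | v M = m ∧ v R = r0 ∧ ∀ j : (↑B : Set V), v j = b j} *
          CPr F'.joint {v | ∀ j : (↑B : Set V), v j = b j} {v | v R = r0})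
    (hmarg : ∀ (r m y : S) (b : (↑B : Set V) → S),
      Pr F.joint {v | v R = r ∧ v M = m ∧ v Y = y ∧ ∀ j : (↑B : Set V), v j = b j} =
        Pr F'.joint {v | v R = r ∧ v M = m ∧ v Y = y ∧ ∀ j : (↑B : Set V), v j = b j}) :
    deltaEff F M R Y r0 r1 val =
      (∑ b : (↑B : Set V) → S, ∑ m : S,
        (∑ y : S, val y *
            CPr F.joint {v | v Y = y}
              {v | v M = m ∧ v R = r0 ∧ ∀ j : (↑B : Set V), v j = b j}) *
          CPr F.joint {v | ∀ j : (↑B : Set V), v j = b j} {v | v R = r0} *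
          CPr F.joint {v | v M = m} {v | v R = r1}) -
        ∑ y : S, val y * CPr F.joint {v | v Y = y} {v | v R = r0}
    ∧ deltaEff F M R Y r0 r1 val = deltaEff F' M R Y r0 r1 val := by
  have h1 := plugin F hacyc M R Y hroot B r0 r1 val hpos hadm
  have h1' := plugin F' hacyc M R Y hroot B r0 r1 val hpos' hadm'
  refine ⟨h1, ?_⟩
  rw [h1, h1', plugin_marg F M R Y B r0 r1 val, plugin_marg F' M R Y B r0 r1 val]
  have hpp : (fun (r m y : S) (b : (↑B : Set V) → S) => Pr F.joint
      {v | v R = r ∧ v M = m ∧ v Y = y ∧ ∀ j : (↑B : Set V), v j = b j})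
      = (fun (r m y : S) (b : (↑B : Set V) → S) => Pr F'.joint
      {v | v R = r ∧ v M = m ∧ v Y = y ∧ ∀ j : (↑B : Set V), v j = b j}) := by
    funext r m y b
    exact hmarg r m y b
  rw [hpp]

end Formal
end
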